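/- arXiv:1209.2502 — 2 statements merged into one kernel-verified Lean document; each statement's English description precedes it below -/
import Mathlib

section
/- Let Ψ be a subset-generating function, let A_0,…,A_n ∈ 𝔍 and let α_0,…,α_n ∈ [0,1] with ∑_{i=0}^n α_i = 1. Then for every j ∈ {0,…,n}, the distance from A_j to the partition average equals the weighted average of the distances: d_μ(A_j, ⊗_{i=0}^n α_i A_i) = ∑_{i=0}^n α_i · d_μ(A_j, A_i). -/
open MeasureTheory Set

noncomputable section

/-- Euclidean space ℝ^m. -/
abbrev Em (m : ℕ) : Type := EuclideanSpace ℝ (Fin m)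

/-- A bounded set whose topological boundary has Lebesgue measure zero
(bounded Jordan measurable set). -/
def JordanMeas {m : ℕ} (A : Set (Em m)) : Prop :=
  Bornology.IsBounded A ∧ volume (frontier A) = 0

/-- A bounded set equal to the closure of its interior (regular compact set). -/
def RegCompact {m : ℕ} (A : Set (Em m)) : Prop :=
  Bornology.IsBounded A ∧ A = closure (interior A)

/-- Membership in the collection 𝔍 of regular compact Jordan measurable sets. -/
def MemJ {m : ℕ} (A : Set (Em m)) : Prop :=
  RegCompact A ∧ JordanMeas A

/-- The partition element Ω_χ = (⋂_{k∈χ} A_k) \ (⋃_{l∉χ} A_l). -/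
def partElem {m n : ℕ} (A : Fin (n+1) → Set (Em m)) (χ : Finset (Fin (n+1))) : Set (Em m) :=
  (⋂ k ∈ χ, A k) \ (⋃ l ∈ χᶜ, A l)

/-- A subset-generating function Ψ. -/
structure SubsetGen (m : ℕ) where
  Ψ : Set (Em m) → ℝ → Set (Em m)
  subset : ∀ A t, JordanMeas A → 0 ≤ t → t ≤ 1 → Ψ A t ⊆ A
  memJ : ∀ A t, JordanMeas A → 0 ≤ t → t ≤ 1 → MemJ (Ψ A t)
  meas : ∀ A t, JordanMeas A → 0 ≤ t → t ≤ 1 →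
    volume (Ψ A t) = ENNReal.ofReal t * volume A
  mono : ∀ A s t, JordanMeas A → 0 ≤ s → s ≤ t → t ≤ 1 → Ψ A s ⊆ Ψ A t

/-- The partition average ⊗_{i=0}^n α_i A_i = ⋃_{∅≠χ⊆{0,…,n}} Ψ(Ω_χ, ∑_{k∈χ} α_k). -/
def partAvg {m n : ℕ} (S : SubsetGen m) (α : Fin (n+1) → ℝ)
    (A : Fin (n+1) → Set (Em m)) : Set (Em m) :=
  ⋃ χ ∈ {χ : Finset (Fin (n+1)) | χ.Nonempty}, S.Ψ (partElem A χ) (∑ k ∈ χ, α k)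

/-- The symmetric difference (pseudo)metric d_μ(A,B) = μ(A Δ B). -/
def dmu {m : ℕ} (A B : Set (Em m)) : ℝ :=
  (volume ((A \ B) ∪ (B \ A))).toReal

/-- The Bernstein weight b(n,x;i) = C(n,i)·x^i·(1−x)^{n−i}. -/
def bern (n i : ℕ) (x : ℝ) : ℝ :=
  (n.choose i : ℝ) * x ^ i * (1 - x) ^ (n - i)

/-- The set-valued Bernstein operator B_n(F,x) = ⊗_{i=0}^n b(n,x;i)·F(i/n). -/
def setBern {m : ℕ} (S : SubsetGen m) (F : ℝ → Set (Em m)) (n : ℕ) (x : ℝ) : Set (Em m) :=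
  partAvg S (fun i : Fin (n+1) => bern n (i : ℕ) x)
    (fun i : Fin (n+1) => F ((i : ℕ) / n))

/-!
The Venn cells `Ω_χ = partElem A χ` partition the space, and on each cell every `A i` is
either the whole cell or empty. The partition average meets `Ω_χ` in `Ψ(Ω_χ, ∑_{k ∈ χ} α_k)`,
so its measure on that cell is the `α`-average of the measures of the `A i` on it. On a cell,
the measure of `A j ∆ C` is an affine function of the measure of `C` (namely
`μ Ω_χ - μ (Ω_χ ∩ C)` if `j ∈ χ` and `μ (Ω_χ ∩ C)` otherwise), so, as `∑ α_i = 1`, it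
commutes with `α`-averages. Summing over the cells gives the identity.
-/

open scoped symmDiff Function

variable {m n : ℕ}

theorem JordanMeas.nullMeasurableSet {A : Set (Em m)} (h : JordanMeas A) :
    NullMeasurableSet A volume :=
  nullMeasurableSet_of_null_frontier h.2

theorem sum_mem_Icc_of_sum_eq_one {ι : Type*} [Fintype ι] {α : ι → ℝ} (hα : ∀ i, 0 ≤ α i)
    (hsum : ∑ i, α i = 1) (s : Finset ι) : ∑ k ∈ s, α k ∈ Icc 0 1 :=
  ⟨Finset.sum_nonneg fun i _ => hα i,
    hsum ▸ Finset.sum_le_sum_of_subset_of_nonneg s.subset_univ fun i _ _ => hα i⟩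

theorem measure_frontier_iInter_eq_zero {X ι : Type*} [TopologicalSpace X] [MeasurableSpace X]
    [Fintype ι] {μ : Measure X} {s : ι → Set X} (hs : ∀ i, μ (frontier (s i)) = 0) :
    μ (frontier (⋂ i, s i)) = 0 := by
  change μ (frontier (iInf s)) = 0
  rw [← Finset.inf_univ_eq_iInf]
  exact Finset.inf_induction (p := fun t => μ (frontier t) = 0) (by simp)
    (fun _ h₁ _ h₂ => null_frontier_inter h₁ h₂) fun i _ => hs i

theorem measureReal_inter_symmDiff_of_subset {X : Type*} [MeasurableSpace X] {μ : Measure X}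
    {s t u : Set X} (hst : s ⊆ t) (hu : NullMeasurableSet u μ) (hs : μ s ≠ ⊤) :
    μ.real (s ∩ t ∆ u) = μ.real s - μ.real (s ∩ u) := by
  have hsu : s ∩ t ∆ u = s \ u := by
    ext x
    simp only [mem_inter_iff, mem_symmDiff, mem_sdiff]
    grind
  rw [hsu, ← measureReal_inter_add_sdiff₀ hu hs]
  ring

theorem inter_symmDiff_of_disjoint {X : Type*} {s t u : Set X} (hst : Disjoint s t) :
    s ∩ t ∆ u = s ∩ u := by
  ext x
  simp only [mem_inter_iff, mem_symmDiff]
  grind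

section partElem

variable {A : Fin (n+1) → Set (Em m)} {χ : Finset (Fin (n+1))}

theorem partElem_eq_iInter (A : Fin (n+1) → Set (Em m)) (χ : Finset (Fin (n+1))) :
    partElem A χ = ⋂ k, if k ∈ χ then A k else (A k)ᶜ := by
  ext x
  simp only [partElem, mem_sdiff, mem_iInter, mem_iUnion, Finset.mem_compl]
  grind

theorem mem_partElem {x : Em m} : x ∈ partElem A χ ↔ ∀ k, x ∈ A k ↔ k ∈ χ := by
  simp only [partElem_eq_iInter, mem_iInter]
  grind

theorem eq_of_mem_partElem {χ' : Finset (Fin (n+1))} {x : Em m} (hx : x ∈ partElem A χ)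
    (hx' : x ∈ partElem A χ') : χ = χ' := by
  ext k
  rw [← mem_partElem.mp hx k, mem_partElem.mp hx' k]

theorem pairwise_disjoint_partElem (A : Fin (n+1) → Set (Em m)) :
    Pairwise (Disjoint on (partElem A)) :=
  fun _ _ h => Set.disjoint_left.mpr fun _ hx hx' => h (eq_of_mem_partElem hx hx')

theorem iUnion_partElem (A : Fin (n+1) → Set (Em m)) : ⋃ χ, partElem A χ = univ := by
  classical
  refine eq_univ_of_forall fun x => mem_iUnion.mpr ⟨({k | x ∈ A k} : Finset _), ?_⟩
  simp [mem_partElem]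

theorem partElem_subset {k : Fin (n+1)} (hk : k ∈ χ) : partElem A χ ⊆ A k :=
  fun _ hx => (mem_partElem.mp hx k).mpr hk

theorem disjoint_partElem {k : Fin (n+1)} (hk : k ∉ χ) : Disjoint (partElem A χ) (A k) :=
  Set.disjoint_left.mpr fun _ hx hxk => hk ((mem_partElem.mp hx k).mp hxk)

theorem measureReal_partElem_inter {μ : Measure (Em m)} (χ : Finset (Fin (n+1)))
    (k : Fin (n+1)) :
    μ.real (partElem A χ ∩ A k) = if k ∈ χ then μ.real (partElem A χ) else 0 := by
  split_ifs with hk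
  · rw [inter_eq_left.mpr (partElem_subset hk)]
  · rw [(disjoint_partElem hk).inter_eq, measureReal_empty]

theorem nullMeasurableSet_partElem {μ : Measure (Em m)}
    (hA : ∀ i, NullMeasurableSet (A i) μ) (χ : Finset (Fin (n+1))) :
    NullMeasurableSet (partElem A χ) μ := by
  rw [partElem_eq_iInter]
  refine .iInter fun k => ?_
  split_ifs
  exacts [hA k, (hA k).compl]

theorem jordanMeas_partElem (hA : ∀ i, JordanMeas (A i)) (hχ : χ.Nonempty) :
    JordanMeas (partElem A χ) := by
  obtain ⟨k, hk⟩ := hχ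
  refine ⟨(hA k).1.subset (partElem_subset hk), ?_⟩
  rw [partElem_eq_iInter]
  refine measure_frontier_iInter_eq_zero fun i => ?_
  split_ifs
  exacts [(hA i).2, frontier_compl (A i) ▸ (hA i).2]

theorem measure_eq_sum_partElem_inter {μ : Measure (Em m)}
    (hA : ∀ i, NullMeasurableSet (A i) μ) (s : Set (Em m)) :
    μ s = ∑ χ, μ (partElem A χ ∩ s) := by
  have hA' : ∀ i, NullMeasurableSet (A i) (μ.restrict s) := fun i => (hA i).mono_ac
    Measure.absolutelyContinuous_restrict
  calc μ s = μ.restrict s (⋃ χ, partElem A χ) := by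
        rw [iUnion_partElem, Measure.restrict_apply_univ]
    _ = ∑ χ, μ.restrict s (partElem A χ) := by
      rw [measure_iUnion₀ ((pairwise_disjoint_partElem A).mono fun _ _ h => h.aedisjoint)
        (nullMeasurableSet_partElem hA'), tsum_fintype]
    _ = ∑ χ, μ (partElem A χ ∩ s) := by
      simp only [Measure.restrict_apply₀ (nullMeasurableSet_partElem hA' _)]

theorem measureReal_eq_sum_partElem_inter {μ : Measure (Em m)}
    (hA : ∀ i, NullMeasurableSet (A i) μ) {s : Set (Em m)} (hs : μ s ≠ ⊤) :
    μ.real s = ∑ χ, μ.real (partElem A χ ∩ s) := by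
  rw [measureReal_def, measure_eq_sum_partElem_inter hA s,
    ENNReal.toReal_sum fun χ _ => measure_ne_top_of_subset inter_subset_right hs]
  rfl

theorem measureReal_partElem_inter_symmDiff {μ : Measure (Em m)} {j : Fin (n+1)}
    (hj : μ (A j) ≠ ⊤) {C : Set (Em m)} (hC : NullMeasurableSet C μ) (χ : Finset (Fin (n+1))) :
    μ.real (partElem A χ ∩ A j ∆ C) = if j ∈ χ
      then μ.real (partElem A χ) - μ.real (partElem A χ ∩ C)
      else μ.real (partElem A χ ∩ C) := by
  split_ifs with hjχ
  · exact measureReal_inter_symmDiff_of_subset (partElem_subset hjχ) hC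
      (measure_ne_top_of_subset (partElem_subset hjχ) hj)
  · rw [inter_symmDiff_of_disjoint (disjoint_partElem hjχ)]

end partElem

section partAvg

variable (S : SubsetGen m) {A : Fin (n+1) → Set (Em m)} {α : Fin (n+1) → ℝ}

theorem SubsetGen.jordanMeas_Ψ_partElem (hA : ∀ i, JordanMeas (A i)) (hα : ∀ i, 0 ≤ α i)
    (hsum : ∑ i, α i = 1) {χ : Finset (Fin (n+1))} (hχ : χ.Nonempty) :
    JordanMeas (S.Ψ (partElem A χ) (∑ k ∈ χ, α k)) :=
  have hs := sum_mem_Icc_of_sum_eq_one hα hsum χ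
  (S.memJ _ _ (jordanMeas_partElem hA hχ) hs.1 hs.2).2

theorem SubsetGen.Ψ_partElem_subset (hA : ∀ i, JordanMeas (A i)) (hα : ∀ i, 0 ≤ α i)
    (hsum : ∑ i, α i = 1) {χ : Finset (Fin (n+1))} (hχ : χ.Nonempty) :
    S.Ψ (partElem A χ) (∑ k ∈ χ, α k) ⊆ partElem A χ :=
  have hs := sum_mem_Icc_of_sum_eq_one hα hsum χ
  S.subset _ _ (jordanMeas_partElem hA hχ) hs.1 hs.2

theorem measureReal_Ψ_partElem (hA : ∀ i, JordanMeas (A i)) (hα : ∀ i, 0 ≤ α i)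
    (hsum : ∑ i, α i = 1) {χ : Finset (Fin (n+1))} (hχ : χ.Nonempty) :
    volume.real (S.Ψ (partElem A χ) (∑ k ∈ χ, α k)) =
      (∑ k ∈ χ, α k) * volume.real (partElem A χ) := by
  have hs := sum_mem_Icc_of_sum_eq_one hα hsum χ
  rw [measureReal_def, S.meas _ _ (jordanMeas_partElem hA hχ) hs.1 hs.2, ENNReal.toReal_mul,
    ENNReal.toReal_ofReal hs.1, measureReal_def]

theorem mem_partAvg {x : Em m} :
    x ∈ partAvg S α A ↔ ∃ χ : Finset (Fin (n+1)), χ.Nonempty ∧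
      x ∈ S.Ψ (partElem A χ) (∑ k ∈ χ, α k) := by
  simp [partAvg]

theorem partElem_inter_partAvg (hA : ∀ i, JordanMeas (A i)) (hα : ∀ i, 0 ≤ α i)
    (hsum : ∑ i, α i = 1) (χ : Finset (Fin (n+1))) :
    partElem A χ ∩ partAvg S α A = ⋃ (_ : χ.Nonempty), S.Ψ (partElem A χ) (∑ k ∈ χ, α k) := by
  ext x
  simp only [mem_inter_iff, mem_partAvg, mem_iUnion, exists_prop]
  constructor
  · rintro ⟨hx, χ', hχ', hxΨ⟩
    obtain rfl := eq_of_mem_partElem (S.Ψ_partElem_subset hA hα hsum hχ' hxΨ) hx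
    exact ⟨hχ', hxΨ⟩
  · rintro ⟨hχ, hxΨ⟩
    exact ⟨S.Ψ_partElem_subset hA hα hsum hχ hxΨ, χ, hχ, hxΨ⟩

theorem measureReal_partElem_inter_partAvg (hA : ∀ i, JordanMeas (A i)) (hα : ∀ i, 0 ≤ α i)
    (hsum : ∑ i, α i = 1) (χ : Finset (Fin (n+1))) :
    volume.real (partElem A χ ∩ partAvg S α A) =
      ∑ i, α i * volume.real (partElem A χ ∩ A i) := by
  have hcells : ∑ i, α i * volume.real (partElem A χ ∩ A i) =
      (∑ k ∈ χ, α k) * volume.real (partElem A χ) := by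
    simp only [measureReal_partElem_inter, mul_ite, mul_zero, Finset.sum_ite_mem,
      Finset.univ_inter, Finset.sum_mul]
  rw [hcells, partElem_inter_partAvg S hA hα hsum]
  rcases χ.eq_empty_or_nonempty with rfl | hχ
  · simp
  · simp only [hχ, iUnion_true, measureReal_Ψ_partElem S hA hα hsum hχ]

theorem nullMeasurableSet_partAvg (hA : ∀ i, JordanMeas (A i)) (hα : ∀ i, 0 ≤ α i)
    (hsum : ∑ i, α i = 1) : NullMeasurableSet (partAvg S α A) volume :=
  .biUnion (to_countable _) fun _ hχ =>
    (S.jordanMeas_Ψ_partElem hA hα hsum hχ).nullMeasurableSet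

theorem isBounded_partAvg (hA : ∀ i, JordanMeas (A i)) (hα : ∀ i, 0 ≤ α i)
    (hsum : ∑ i, α i = 1) : Bornology.IsBounded (partAvg S α A) :=
  (Bornology.isBounded_biUnion (toFinite _)).mpr fun _ hχ =>
    (S.jordanMeas_Ψ_partElem hA hα hsum hχ).1

end partAvg

theorem dmu_eq_measureReal (A B : Set (Em m)) : dmu A B = volume.real (A ∆ B) := rfl

/-- d_μ(A_j, ⊗_{i=0}^n α_i A_i) = ∑_{i=0}^n α_i · d_μ(A_j, A_i). -/
theorem stmt_10 {m n : ℕ} (S : SubsetGen m) (A : Fin (n+1) → Set (Em m))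
    (hA : ∀ i, MemJ (A i)) (α : Fin (n+1) → ℝ)
    (hα : ∀ i, α i ∈ Set.Icc (0:ℝ) 1) (hsum : ∑ i, α i = 1) (j : Fin (n+1)) :
    dmu (A j) (partAvg S α A) = ∑ i, α i * dmu (A j) (A i) := by
  have hJ : ∀ i, JordanMeas (A i) := fun i => (hA i).2
  have hα₀ : ∀ i, 0 ≤ α i := fun i => (hα i).1
  have hnull : ∀ i, NullMeasurableSet (A i) volume := fun i => (hJ i).nullMeasurableSet
  have hfinite : ∀ C, Bornology.IsBounded C → volume (A j ∆ C) ≠ ⊤ := fun C hC =>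
    (((hJ j).1.union hC).subset symmDiff_subset_union).measure_lt_top.ne
  have hcell : ∀ χ, volume.real (partElem A χ ∩ A j ∆ partAvg S α A) =
      ∑ i, α i * volume.real (partElem A χ ∩ A j ∆ A i) := by
    intro χ
    have hAj : volume (A j) ≠ ⊤ := (hJ j).1.measure_lt_top.ne
    simp only [measureReal_partElem_inter_symmDiff hAj (nullMeasurableSet_partAvg S hJ hα₀ hsum),
      measureReal_partElem_inter_symmDiff hAj (hnull _),
      measureReal_partElem_inter_partAvg S hJ hα₀ hsum]
    split_ifs
    · simp only [mul_sub, Finset.sum_sub_distrib, ← Finset.sum_mul, hsum, one_mul]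
    · rfl
  calc dmu (A j) (partAvg S α A) = ∑ χ, volume.real (partElem A χ ∩ A j ∆ partAvg S α A) :=
        measureReal_eq_sum_partElem_inter hnull (hfinite _ (isBounded_partAvg S hJ hα₀ hsum))
    _ = ∑ i, α i * ∑ χ, volume.real (partElem A χ ∩ A j ∆ A i) := by
        simp only [hcell, Finset.mul_sum]
        exact Finset.sum_comm
    _ = ∑ i, α i * dmu (A j) (A i) := by
        simp only [dmu_eq_measureReal,
          ← measureReal_eq_sum_partElem_inter hnull (hfinite _ (hJ _).1)]
end
end

section
/- Let Ψ be a subset-generating function, let A_0, A_1 ∈ 𝔍 and let α_0, β_0 ∈ [0,1]. Then the binary partition average has the metric property: d_μ(α_0 A_0 ⊗ (1−α_0) A_1, β_0 A_0 ⊗ (1−β_0) A_1) = |α_0 − β_0| · d_μ(A_0, A_1). -/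
open MeasureTheory Set

noncomputable section

/-!
Write `D₀ = A₀ \ A₁`, `D₁ = A₁ \ A₀`, `I = A₀ ∩ A₁`. The average with weights `(t, 1 - t)` is
`Ψ(D₀, t) ∪ Ψ(D₁, 1 - t) ∪ Ψ(I, 1)`, one piece in each of the disjoint regions `D₀, D₁, I`, so the
symmetric difference of two such averages splits region by region. The `I`-pieces coincide, and
on `D₀` and `D₁` monotonicity of `Ψ` makes the symmetric difference `Ψ(D, t) \ Ψ(D, s)`, of measure
`|s - t| μ(D)`. Summing gives `|a - b| (μ D₀ + μ D₁) = |a - b| μ(A₀ Δ A₁)`.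
-/

open scoped symmDiff

theorem measure_frontier_inter_null {X : Type*} [TopologicalSpace X] [MeasurableSpace X]
    {μ : Measure X} {A B : Set X} (hA : μ (frontier A) = 0) (hB : μ (frontier B) = 0) :
    μ (frontier (A ∩ B)) = 0 :=
  measure_mono_null (frontier_inter_subset A B) <| measure_union_null
    (measure_mono_null inter_subset_left hA) (measure_mono_null inter_subset_right hB)

namespace JordanMeas

variable {m : ℕ} {A B : Set (Em m)}

theorem nullMeasurableSet_s11 (hA : JordanMeas A) : NullMeasurableSet A volume :=
  nullMeasurableSet_of_null_frontier hA.2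

theorem inter (hA : JordanMeas A) (hB : JordanMeas B) : JordanMeas (A ∩ B) :=
  ⟨hA.1.subset inter_subset_left, measure_frontier_inter_null hA.2 hB.2⟩

theorem diff (hA : JordanMeas A) (hB : JordanMeas B) : JordanMeas (A \ B) :=
  ⟨hA.1.subset sdiff_subset, by
    rw [sdiff_eq]; exact measure_frontier_inter_null hA.2 (by rw [frontier_compl]; exact hB.2)⟩

end JordanMeas

theorem Set.union_symmDiff_union_of_subset {α : Type*} {D E X X' Y Y' : Set α}
    (hDE : Disjoint D E) (hX : X ⊆ D) (hX' : X' ⊆ D) (hY : Y ⊆ E) (hY' : Y' ⊆ E) :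
    (X ∪ Y) ∆ (X' ∪ Y') = X ∆ X' ∪ Y ∆ Y' := by
  have hDE := @Set.disjoint_left.1 hDE
  ext x
  have := @hX x; have := @hX' x; have := @hY x; have := @hY' x; have := @hDE x
  simp only [mem_symmDiff, mem_union]
  tauto

namespace SubsetGen

variable {m : ℕ} (S : SubsetGen m) {A : Set (Em m)}

theorem symmDiff_subset (hA : JordanMeas A) {s t : ℝ} (hs : s ∈ Icc (0 : ℝ) 1)
    (ht : t ∈ Icc (0 : ℝ) 1) : S.Ψ A s ∆ S.Ψ A t ⊆ A :=
  symmDiff_le_sup.trans (union_subset (S.subset A s hA hs.1 hs.2) (S.subset A t hA ht.1 ht.2))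

theorem volume_sdiff (hA : JordanMeas A) {s t : ℝ} (hs : 0 ≤ s) (hst : s ≤ t) (ht : t ≤ 1) :
    volume (S.Ψ A t \ S.Ψ A s) = ENNReal.ofReal (t - s) * volume A := by
  have hfin : volume A ≠ ⊤ := hA.1.measure_lt_top.ne
  have hΨs := S.meas A s hA hs (hst.trans ht)
  rw [measure_sdiff (S.mono A s t hA hs hst ht)
      (S.memJ A s hA hs (hst.trans ht)).2.nullMeasurableSet_s11
      (by rw [hΨs]; exact ENNReal.mul_ne_top ENNReal.ofReal_ne_top hfin),
    S.meas A t hA (hs.trans hst) ht, hΨs, ← ENNReal.sub_mul (fun _ _ => hfin),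
    ← ENNReal.ofReal_sub _ hs]

theorem volume_symmDiff (hA : JordanMeas A) {s t : ℝ} (hs : s ∈ Icc (0 : ℝ) 1)
    (ht : t ∈ Icc (0 : ℝ) 1) :
    volume (S.Ψ A s ∆ S.Ψ A t) = ENNReal.ofReal |s - t| * volume A := by
  rcases le_total s t with hst | hts
  · rw [symmDiff_of_le (S.mono A s t hA hs.1 hst ht.2), S.volume_sdiff hA hs.1 hst ht.2,
      abs_sub_comm, abs_of_nonneg (sub_nonneg.2 hst)]
  · rw [symmDiff_of_ge (S.mono A t s hA ht.1 hts hs.2), S.volume_sdiff hA ht.1 hts hs.2,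
      abs_of_nonneg (sub_nonneg.2 hts)]

end SubsetGen

theorem partAvg_fin_two {m : ℕ} (S : SubsetGen m) (α : Fin 2 → ℝ) (A : Fin 2 → Set (Em m)) :
    partAvg S α A = S.Ψ (A 0 \ A 1) (α 0) ∪ (S.Ψ (A 1 \ A 0) (α 1)
      ∪ S.Ψ (A 0 ∩ A 1) (α 0 + α 1)) := by
  have hχ : {χ : Finset (Fin 2) | χ.Nonempty} = {{0}, {1}, {0, 1}} := by
    ext χ; revert χ; decide
  have h0 : partElem A {0} = A 0 \ A 1 := by
    simp [partElem, show ({0}ᶜ : Finset (Fin 2)) = {1} by decide]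
  have h1 : partElem A {1} = A 1 \ A 0 := by
    simp [partElem, show ({1}ᶜ : Finset (Fin 2)) = {0} by decide]
  have h01 : partElem A {0, 1} = A 0 ∩ A 1 := by
    simp [partElem, show ({0, 1} : Finset (Fin 2))ᶜ = ∅ by decide]
  simp [partAvg, hχ, h0, h1, h01]

theorem volume_symmDiff_partAvg_fin_two {m : ℕ} (S : SubsetGen m) {A₀ A₁ : Set (Em m)}
    (h₀ : JordanMeas A₀) (h₁ : JordanMeas A₁) {a b : ℝ} (ha : a ∈ Icc (0 : ℝ) 1)
    (hb : b ∈ Icc (0 : ℝ) 1) :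
    volume (partAvg S ![a, 1 - a] ![A₀, A₁] ∆ partAvg S ![b, 1 - b] ![A₀, A₁]) =
      ENNReal.ofReal |a - b| * volume (A₀ ∆ A₁) := by
  have hD₀ := h₀.diff h₁
  have hD₁ := h₁.diff h₀
  have ha' : 1 - a ∈ Icc (0 : ℝ) 1 := ⟨by linarith [ha.2], by linarith [ha.1]⟩
  have hb' : 1 - b ∈ Icc (0 : ℝ) 1 := ⟨by linarith [hb.2], by linarith [hb.1]⟩
  have hZ : S.Ψ (A₀ ∩ A₁) 1 ⊆ A₀ ∩ A₁ := S.subset _ 1 (h₀.inter h₁) zero_le_one le_rfl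
  have hsplit : partAvg S ![a, 1 - a] ![A₀, A₁] ∆ partAvg S ![b, 1 - b] ![A₀, A₁] =
      S.Ψ (A₀ \ A₁) a ∆ S.Ψ (A₀ \ A₁) b ∪ S.Ψ (A₁ \ A₀) (1 - a) ∆ S.Ψ (A₁ \ A₀) (1 - b) := by
    simp only [partAvg_fin_two, Matrix.cons_val_zero, Matrix.cons_val_one, add_sub_cancel]
    rw [union_symmDiff_union_of_subset disjoint_sdiff_left
        (S.subset _ a hD₀ ha.1 ha.2) (S.subset _ b hD₀ hb.1 hb.2)
        (union_subset ((S.subset _ _ hD₁ ha'.1 ha'.2).trans sdiff_subset)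
          (hZ.trans inter_subset_right))
        (union_subset ((S.subset _ _ hD₁ hb'.1 hb'.2).trans sdiff_subset)
          (hZ.trans inter_subset_right)),
      union_symmDiff_union_of_subset disjoint_sdiff_left
        (S.subset _ _ hD₁ ha'.1 ha'.2) (S.subset _ _ hD₁ hb'.1 hb'.2)
        (hZ.trans inter_subset_left) (hZ.trans inter_subset_left),
      symmDiff_self, bot_eq_empty, union_empty]
  have hdisj : Disjoint (S.Ψ (A₀ \ A₁) a ∆ S.Ψ (A₀ \ A₁) b)
      (S.Ψ (A₁ \ A₀) (1 - a) ∆ S.Ψ (A₁ \ A₀) (1 - b)) :=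
    disjoint_sdiff_sdiff.mono (S.symmDiff_subset hD₀ ha hb) (S.symmDiff_subset hD₁ ha' hb')
  have hnull : NullMeasurableSet (S.Ψ (A₁ \ A₀) (1 - a) ∆ S.Ψ (A₁ \ A₀) (1 - b)) volume :=
    (S.memJ _ _ hD₁ ha'.1 ha'.2).2.nullMeasurableSet_s11.symmDiff
      (S.memJ _ _ hD₁ hb'.1 hb'.2).2.nullMeasurableSet_s11
  rw [hsplit, measure_union₀ hnull hdisj.aedisjoint,
    S.volume_symmDiff hD₀ ha hb, S.volume_symmDiff hD₁ ha' hb',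
    measure_symmDiff_eq h₀.nullMeasurableSet_s11 h₁.nullMeasurableSet_s11,
    show 1 - a - (1 - b) = b - a by ring, abs_sub_comm b a, mul_add]

/-- the metric property of the binary partition average:
d_μ(α₀A₀ ⊗ (1−α₀)A₁, β₀A₀ ⊗ (1−β₀)A₁) = |α₀ − β₀| · d_μ(A₀, A₁). -/
theorem stmt_11 {m : ℕ} (S : SubsetGen m) (A₀ A₁ : Set (Em m))
    (h₀ : MemJ A₀) (h₁ : MemJ A₁)
    (a b : ℝ) (ha : a ∈ Set.Icc (0:ℝ) 1) (hb : b ∈ Set.Icc (0:ℝ) 1) :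
    dmu (partAvg S ![a, 1 - a] ![A₀, A₁]) (partAvg S ![b, 1 - b] ![A₀, A₁]) =
      |a - b| * dmu A₀ A₁ := by
  have h := volume_symmDiff_partAvg_fin_two S h₀.2 h₁.2 ha hb
  simp only [symmDiff_def, sup_eq_union] at h
  rw [dmu, dmu, h, ENNReal.toReal_mul, ENNReal.toReal_ofReal (abs_nonneg _)]
end
end
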